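/- arXiv:1902.05432 — 2 statements merged into one kernel-verified Lean document; each statement's English description precedes it below -/
import Mathlib

section
/- Let f : 2^S → ℝ be z-indexable and let 1 ≤ k ≤ n−1. Define q_A = (∏_{i∈A} z_i)/T_k(S) for A ∈ S^(k), and let V = Σ_{A∈S^(k)} q_A P_f(A, σ₀), where σ₀ is any fixed search (V is independent of the choice of σ₀). Then the mixed Searcher strategy s that selects A ∈ S^(k) with probability q_A and then plays s_A guarantees an expected payoff of at least V: for every Hider pure strategy H ∈ S^(k), Σ_{A∈S^(k)} q_A P_f(H, s_A) ≥ V. -/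
/-- `f` is `z`-indexable. -/
def ZIndexable {n : ℕ} (f : Finset (Fin n) → ℝ) (z : Fin n → ℝ) : Prop :=
  (∀ r : Fin n, 0 < z r) ∧
  (∀ A : Finset (Fin n), 0 < f A) ∧
  (∀ A B : Finset (Fin n), B ⊂ A → f A < f B) ∧
  (∀ (A : Finset (Fin n)) (i j : Fin n), i ≠ j → i ∉ A → j ∉ A →
    (f (insert i (insert j A)) - f (insert j A)) /
      (f (insert j (insert i A)) - f (insert i A)) = z i / z j)

/-- The set of locations searched by the time all targets in `H` are found. -/
def stopSet {n : ℕ} (σ : Equiv.Perm (Fin n)) (H : Finset (Fin n)) : Finset (Fin n) :=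
  (Finset.univ.filter
    (fun t : Fin n => (t : ℕ) ≤ H.sup (fun h => ((σ.symm h : Fin n) : ℕ)))).image σ

/-- The payoff `P_f(H,σ) = f(S^σ_i)`, `i` minimal with `H ⊆ S^σ_i`. -/
def payoff {n : ℕ} (f : Finset (Fin n) → ℝ) (σ : Equiv.Perm (Fin n))
    (H : Finset (Fin n)) : ℝ :=
  f (stopSet σ H)

/-- The searches whose first `k` locations are exactly the set `A`. -/
def startsWith {n : ℕ} (k : ℕ) (A : Finset (Fin n)) : Finset (Equiv.Perm (Fin n)) :=
  Finset.univ.filter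
    (fun σ => (Finset.univ.filter (fun t : Fin n => (t : ℕ) < k)).image σ = A)

/-- `P_f(H, s_A)`: the expected payoff of the mixed strategy `s_A` (search `A` first, then
the rest in uniformly random order) against the Hider strategy `H`. -/
noncomputable def sPay {n : ℕ} (f : Finset (Fin n) → ℝ) (k : ℕ) (A H : Finset (Fin n)) : ℝ :=
  (∑ σ ∈ startsWith k A, payoff f σ H) / (startsWith k A).card

/-- `T_k(A) = Σ_{B ⊆ A, |B| = k} ∏_{i∈B} z_i`. -/
def T {n : ℕ} (z : Fin n → ℝ) (k : ℕ) (A : Finset (Fin n)) : ℝ :=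
  ∑ B ∈ Finset.powersetCard k A, ∏ i ∈ B, z i

/-!
A `z`-indexable `f` agrees on nonempty sets with a combination `∑ m, c m * T z m Aᶜ`: both
satisfy the `z`-indexability relation with denominators cleared, which determines a function
from its values on one set of each size, and on such sets the `T z m (·)ᶜ` form a triangular
system. By linearity it suffices to take `f A = T z m Aᶜ`, and then both sides equal
`T z (k + m) univ / T z k univ`. For a fixed search, pairs `(A, B)` with `B` searched after `A`
correspond to the `(k + m)`-sets `D`, with `A` the first `k` elements of `D`. Against `s_A`, the
locations `B` left unsearched at the stopping time are those searched after `H \ A`, which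
happens with probability `1 / C(#(H \ A) + m, m)`; regrouping by `D = A ∪ B`, the admissible `A`
are the `k`-subsets of `D` containing `H ∩ D`, and their number cancels that probability.
-/

open Finset

section SubsetSums

variable {n : ℕ} (z : Fin n → ℝ)

lemma T_zero (C : Finset (Fin n)) : T z 0 C = 1 := by
  simp [T]

lemma T_eq_zero_of_card_lt {m : ℕ} {C : Finset (Fin n)} (h : #C < m) : T z m C = 0 := by
  simp [T, powersetCard_eq_empty.2 h]

lemma T_card_self (C : Finset (Fin n)) : T z #C C = ∏ i ∈ C, z i := by
  simp [T]

lemma T_succ_insert {j : Fin n} {C : Finset (Fin n)} (hj : j ∉ C) (m : ℕ) :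
    T z (m + 1) (insert j C) = T z (m + 1) C + z j * T z m C := by
  have hjB : ∀ B ∈ powersetCard m C, j ∉ B := fun B hB hjB => hj ((mem_powersetCard.1 hB).1 hjB)
  have hdisj : Disjoint (powersetCard (m + 1) C) ((powersetCard m C).image (insert j)) := by
    refine disjoint_left.2 fun B hB hB' => ?_
    obtain ⟨B', -, rfl⟩ := mem_image.1 hB'
    exact hj ((mem_powersetCard.1 hB).1 (mem_insert_self j B'))
  have hinj : Set.InjOn (insert j) (powersetCard m C : Set (Finset (Fin n))) :=
    fun B hB B' hB' h => by
      simpa [erase_insert (hjB B hB), erase_insert (hjB B' hB')] using congrArg (erase · j) h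
  rw [T, powersetCard_succ_insert hj, sum_union hdisj, sum_image hinj, T, T, mul_sum]
  exact congrArg _ (sum_congr rfl fun B hB => prod_insert (hjB B hB))

lemma T_eq_sum_ite {C X : Finset (Fin n)} (hCX : C ⊆ X) (m : ℕ) :
    T z m C = ∑ B ∈ powersetCard m X, if B ⊆ C then ∏ i ∈ B, z i else 0 := by
  rw [← sum_filter, T]
  congr 1
  ext B
  simp only [mem_powersetCard, mem_filter]
  exact ⟨fun h => ⟨⟨h.1.trans hCX, h.2⟩, h.1⟩, fun h => ⟨h.2, h.1.2⟩⟩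

end SubsetSums

section Exchange

variable {α : Type*} [DecidableEq α] (z : α → ℝ)

/-- The `z`-indexability relation at the base `A.erase i`, with denominators cleared. -/
def exchangeSubmodule : Submodule ℝ (Finset α → ℝ) where
  carrier := {g | ∀ A i j, i ∈ A → j ∉ A →
    z i * g A = (z i - z j) * g (insert j A) + z j * g (insert j (A.erase i))}
  add_mem' {g h} hg hh A i j hi hj := by
    simp only [Pi.add_apply]
    linear_combination hg A i j hi hj + hh A i j hi hj
  zero_mem' _ _ _ _ _ := by simp
  smul_mem' c g hg A i j hi hj := by
    simp only [Pi.smul_apply, smul_eq_mul]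
    linear_combination c * hg A i j hi hj

variable {z}

/-- The exchange relation expresses `g A` through `g` at a larger set and at a set of the same
size that is closer to `R #A`. -/
lemma eq_zero_of_mem_exchangeSubmodule [Fintype α] (hz : ∀ i, z i ≠ 0)
    {g : Finset α → ℝ} (hg : g ∈ exchangeSubmodule z) (R : ℕ → Finset α)
    (hR : ∀ s ≤ Fintype.card α, #(R s) = s)
    (h0 : ∀ s, 1 ≤ s → s ≤ Fintype.card α → g (R s) = 0) {A : Finset α} (hA : A.Nonempty) :
    g A = 0 := by
  suffices ∀ d e (A : Finset α), Fintype.card α - #A = d → #(A \ R #A) = e → A.Nonempty →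
      g A = 0 from this _ _ A rfl rfl hA
  intro d
  induction d using Nat.strong_induction_on with | _ d ihd => ?_
  intro e
  induction e using Nat.strong_induction_on with | _ e ihe => ?_
  intro A hd he hA
  have hAcard : #A ≤ Fintype.card α := card_le_univ A
  have hRA : #(R #A) = #A := hR _ hAcard
  by_cases hAR : A = R #A
  · exact (congrArg g hAR).trans (h0 _ (card_pos.2 hA) hAcard)
  have hAR' : ¬ A ⊆ R #A := fun h => hAR (eq_of_subset_of_card_le h hRA.le)
  have hRA' : ¬ R #A ⊆ A := fun h => hAR (eq_of_subset_of_card_le h hRA.ge).symm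
  obtain ⟨i, hiA, hiR⟩ := not_subset.1 hAR'
  obtain ⟨j, hjR, hjA⟩ := not_subset.1 hRA'
  have hbig : g (insert j A) = 0 := by
    have : #A < Fintype.card α := (card_lt_univ_of_notMem hjA)
    refine ihd _ ?_ _ _ rfl rfl (insert_nonempty j A)
    rw [card_insert_of_notMem hjA]; omega
  have hsame : g (insert j (A.erase i)) = 0 := by
    have hcard : #(insert j (A.erase i)) = #A := by
      rw [card_insert_of_notMem (fun h => hjA (mem_of_mem_erase h)), card_erase_of_mem hiA]
      have := card_pos.2 hA; omega
    have hsdiff : insert j (A.erase i) \ R #A = (A \ R #A).erase i := by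
      ext x
      by_cases hxj : x = j
      · subst hxj; simp [hjR]
      · simp [hxj, and_assoc]
    refine ihe _ ?_ _ (by rw [hcard, hd]) rfl (insert_nonempty _ _)
    rw [hcard, hsdiff, card_erase_of_mem (mem_sdiff.2 ⟨hiA, hiR⟩)]
    have := card_pos.2 ⟨i, mem_sdiff.2 ⟨hiA, hiR⟩⟩; omega
  have := hg A i j hiA hjA
  rw [hbig, hsame, mul_zero, mul_zero, add_zero] at this
  exact (mul_eq_zero.1 this).resolve_left (hz i)

end Exchange

section Representation

variable {n : ℕ} {z : Fin n → ℝ}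

lemma T_compl_mem_exchangeSubmodule (m : ℕ) :
    (fun A => T z m Aᶜ) ∈ exchangeSubmodule z := by
  intro A i j hiA hjA
  have hij : i ≠ j := fun h => hjA (h ▸ hiA)
  set C := Aᶜ.erase j
  have hiC : i ∉ C := fun h => mem_compl.1 (mem_of_mem_erase h) hiA
  have hjC : j ∉ C := notMem_erase j _
  have hA : Aᶜ = insert j C := (insert_erase (mem_compl.2 hjA)).symm
  have hjA' : (insert j A)ᶜ = C := compl_insert
  have hijA : (insert j (A.erase i))ᶜ = insert i C := by
    rw [compl_insert, compl_erase, erase_insert_of_ne hij]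
  simp only [hA, hjA', hijA]
  cases m with
  | zero => simp only [T_zero]; ring
  | succ m => rw [T_succ_insert z hjC, T_succ_insert z hiC]; ring

lemma ZIndexable.mem_exchangeSubmodule {f : Finset (Fin n) → ℝ} (hf : ZIndexable f z) :
    f ∈ exchangeSubmodule z := by
  obtain ⟨hz, -, hmono, hratio⟩ := hf
  intro A i j hiA hjA
  have hij : i ≠ j := fun h => hjA (h ▸ hiA)
  have h := hratio (A.erase i) i j hij (notMem_erase i A) (fun h => hjA (mem_of_mem_erase h))
  rw [insert_comm, insert_erase hiA] at h
  have hden : f (insert j A) - f A ≠ 0 :=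
    (sub_neg.2 (hmono _ _ (ssubset_insert hjA))).ne
  rw [div_eq_div_iff hden (hz j).ne'] at h
  linear_combination h

def initialSet (n s : ℕ) : Finset (Fin n) :=
  univ.filter fun x : Fin n => (x : ℕ) < s

lemma card_initialSet {s : ℕ} (hs : s ≤ n) : #(initialSet n s) = s := by
  rw [initialSet, Fin.card_filter_val_lt, min_eq_right hs]

/-- The complement of `initialSet n (n - u)` has `u` elements, so `T z m` vanishes on it for
`m > u` and is a nonzero product for `m = u`: the system is triangular. -/
lemma exists_sum_T_compl_eq_on_initialSet (hz : ∀ i, z i ≠ 0) (f : Finset (Fin n) → ℝ) :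
    ∃ c : Fin n → ℝ, ∀ u : Fin n,
      ∑ m, c m * T z m (initialSet n (n - u))ᶜ = f (initialSet n (n - u)) := by
  let M : Matrix (Fin n) (Fin n) ℝ := Matrix.of fun u m => T z m (initialSet n (n - u))ᶜ
  have hcard : ∀ u : Fin n, #(initialSet n (n - u))ᶜ = u := fun u => by
    rw [card_compl, Fintype.card_fin, card_initialSet (Nat.sub_le n u)]; omega
  have hlower : M.IsLowerTriangular := fun u m (h : u < m) => by
    simp only [M, Matrix.of_apply]
    exact T_eq_zero_of_card_lt z (by rw [hcard]; exact h)
  have hdet : IsUnit M.det := by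
    rw [Matrix.det_of_isLowerTriangular M hlower, isUnit_iff_ne_zero]
    refine prod_ne_zero_iff.2 fun u _ => ?_
    simp only [M, Matrix.of_apply]
    nth_rw 1 [← hcard u]
    rw [T_card_self]
    exact prod_ne_zero_iff.2 fun i _ => hz i
  obtain ⟨c, hc⟩ := Matrix.mulVec_surjective_iff_isUnit.2
    ((Matrix.isUnit_iff_isUnit_det M).2 hdet) fun u => f (initialSet n (n - u))
  refine ⟨c, fun u => ?_⟩
  rw [← congrFun hc u]
  simp only [Matrix.mulVec, dotProduct, M, Matrix.of_apply, mul_comm]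

theorem ZIndexable.exists_eq_sum_T_compl {f : Finset (Fin n) → ℝ} (hf : ZIndexable f z) :
    ∃ c : Fin n → ℝ, ∀ A : Finset (Fin n), A.Nonempty → f A = ∑ m, c m * T z m Aᶜ := by
  have hz : ∀ i, z i ≠ 0 := fun i => (hf.1 i).ne'
  obtain ⟨c, hc⟩ := exists_sum_T_compl_eq_on_initialSet hz f
  refine ⟨c, fun A hA => sub_eq_zero.1 ?_⟩
  let g : Finset (Fin n) → ℝ := f - ∑ m, c m • fun A => T z m Aᶜ
  have hg : g ∈ exchangeSubmodule z :=
    sub_mem hf.mem_exchangeSubmodule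
      (sum_mem fun m _ => Submodule.smul_mem _ _ (T_compl_mem_exchangeSubmodule m))
  have hgA : ∀ A, g A = f A - ∑ m, c m * T z m Aᶜ := fun A => by simp [g]
  rw [← hgA]
  refine eq_zero_of_mem_exchangeSubmodule hz hg (initialSet n)
    (fun s hs => card_initialSet (by simpa using hs)) (fun s hs1 hsn => ?_) hA
  rw [Fintype.card_fin] at hsn
  have := hc ⟨n - s, by omega⟩
  rw [show n - (n - s) = s by omega] at this
  rw [hgA, this, sub_self]

end Representation

section Precedes

variable {α β : Type*} [LinearOrder β] {key : α → β}

def Precedes (key : α → β) (P Q : Finset α) : Prop :=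
  ∀ a ∈ P, ∀ b ∈ Q, key a < key b

instance (key : α → β) (P Q : Finset α) : Decidable (Precedes key P Q) := by
  unfold Precedes; infer_instance

lemma Precedes.disjoint {P Q : Finset α} (h : Precedes key P Q) : Disjoint P Q :=
  disjoint_left.2 fun a ha ha' => lt_irrefl _ (h a ha a ha')

variable [DecidableEq α]

lemma eq_of_precedes_sdiff {D F F' : Finset α} (hF : F ⊆ D) (hF' : F' ⊆ D) (hcard : #F = #F')
    (h : Precedes key F (D \ F)) (h' : Precedes key F' (D \ F')) : F = F' := by
  by_contra hne
  obtain ⟨x, hxF, hxF'⟩ := not_subset.1 fun hsub => hne (eq_of_subset_of_card_le hsub hcard.ge)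
  obtain ⟨y, hyF', hyF⟩ := not_subset.1 fun hsub => hne (eq_of_subset_of_card_le hsub hcard.le).symm
  exact lt_asymm (h x hxF y (mem_sdiff.2 ⟨hF' hyF', hyF⟩))
    (h' y hyF' x (mem_sdiff.2 ⟨hF hxF, hxF'⟩))

lemma exists_precedes_sdiff {D : Finset α} (hkey : Set.InjOn key D) {p : ℕ} (hp : p ≤ #D) :
    ∃ F ⊆ D, #F = p ∧ Precedes key F (D \ F) := by
  induction p with
  | zero => exact ⟨∅, empty_subset D, rfl, fun a ha => absurd ha (notMem_empty a)⟩
  | succ p ih =>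
    obtain ⟨F, hFD, hF, hprec⟩ := ih (by omega)
    have hne : (D \ F).Nonempty := by
      rw [← card_pos, card_sdiff_of_subset hFD]; omega
    obtain ⟨x, hx, hmin⟩ := exists_min_image (D \ F) key hne
    obtain ⟨hxD, hxF⟩ := mem_sdiff.1 hx
    refine ⟨insert x F, insert_subset hxD hFD, by rw [card_insert_of_notMem hxF, hF], ?_⟩
    intro a ha b hb
    obtain ⟨hbD, hbxF⟩ := mem_sdiff.1 hb
    have hbF : b ∈ D \ F := mem_sdiff.2 ⟨hbD, fun h => hbxF (mem_insert_of_mem h)⟩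
    rcases mem_insert.1 ha with rfl | haF
    · refine (hmin b hbF).lt_of_ne fun h => hbxF ?_
      rw [hkey hxD hbD h]
      exact mem_insert_self b F
    · exact hprec a haF b hbF

lemma card_filter_precedes_sdiff {D : Finset α} (hkey : Set.InjOn key D) {p : ℕ} (hp : p ≤ #D) :
    #{F ∈ powersetCard p D | Precedes key F (D \ F)} = 1 := by
  obtain ⟨F, hFD, hF, hprec⟩ := exists_precedes_sdiff hkey hp
  refine card_eq_one.2 ⟨F, eq_singleton_iff_unique_mem.2 ⟨?_, fun F' hF' => ?_⟩⟩
  · exact mem_filter.2 ⟨mem_powersetCard.2 ⟨hFD, hF⟩, hprec⟩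
  · obtain ⟨hmem, hprec'⟩ := mem_filter.1 hF'
    obtain ⟨hF'D, hcard⟩ := mem_powersetCard.1 hmem
    exact eq_of_precedes_sdiff hF'D hFD (hcard.trans hF.symm) hprec' hprec

end Precedes

lemma sum_powersetCard_sum_powersetCard_compl {α M : Type*} [Fintype α] [DecidableEq α]
    [AddCommMonoid M] (k m : ℕ) (g : Finset α → Finset α → M) :
    ∑ A ∈ powersetCard k univ, ∑ B ∈ powersetCard m Aᶜ, g A B =
      ∑ D ∈ powersetCard (k + m) univ, ∑ A ∈ powersetCard k D, g A (D \ A) := by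
  rw [sum_sigma', sum_sigma']
  refine sum_nbij' (fun x => ⟨x.1 ∪ x.2, x.1⟩) (fun y => ⟨y.2, y.1 \ y.2⟩) ?_ ?_ ?_ ?_ ?_
  · rintro ⟨A, B⟩ h
    simp only [mem_sigma, mem_powersetCard, subset_compl_iff_disjoint_left, subset_univ,
      true_and] at h ⊢
    exact ⟨by rw [card_union_of_disjoint h.2.1, h.1, h.2.2], subset_union_left, h.1⟩
  · rintro ⟨D, A⟩ h
    simp only [mem_sigma, mem_powersetCard, subset_univ, true_and] at h ⊢
    refine ⟨h.2.2, subset_compl_iff_disjoint_left.2 disjoint_sdiff, ?_⟩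
    rw [card_sdiff_of_subset h.2.1, h.1, h.2.2]; omega
  · rintro ⟨A, B⟩ h
    simp only [mem_sigma, mem_powersetCard, subset_compl_iff_disjoint_left] at h
    simp [union_sdiff_cancel_left h.2.1]
  · rintro ⟨D, A⟩ h
    simp only [mem_sigma, mem_powersetCard] at h
    simp [union_sdiff_of_subset h.2.1]
  · rintro ⟨A, B⟩ h
    simp only [mem_sigma, mem_powersetCard, subset_compl_iff_disjoint_left] at h
    simp [union_sdiff_cancel_left h.2.1]

lemma sum_prod_union_mul_sum_powersetCard_compl {α R : Type*} [Fintype α] [DecidableEq α]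
    [CommSemiring R] (z : α → R) (k m : ℕ) (w : Finset α → Finset α → R) :
    ∑ A ∈ powersetCard k univ, ∑ B ∈ powersetCard m Aᶜ, (∏ i ∈ A ∪ B, z i) * w A B =
      ∑ D ∈ powersetCard (k + m) univ, (∏ i ∈ D, z i) * ∑ A ∈ powersetCard k D, w A (D \ A) := by
  rw [sum_powersetCard_sum_powersetCard_compl]
  refine sum_congr rfl fun D _ => ?_
  rw [mul_sum]
  exact sum_congr rfl fun A hA => by rw [union_sdiff_of_subset (mem_powersetCard.1 hA).1]

section Search

variable {n k : ℕ}

/-- The step, counted from `0`, at which the search `σ` visits `x`. -/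
def searchTime (σ : Equiv.Perm (Fin n)) (x : Fin n) : ℕ := σ.symm x

lemma searchTime_injective (σ : Equiv.Perm (Fin n)) : Function.Injective (searchTime σ) :=
  fun _ _ h => σ.symm.injective (Fin.ext h)

@[simp]
lemma searchTime_mul_apply (τ σ : Equiv.Perm (Fin n)) (x : Fin n) :
    searchTime (τ * σ) (τ x) = searchTime σ x := by
  simp [searchTime, Equiv.Perm.mul_def]

lemma mem_image_filter_univ_iff (σ : Equiv.Perm (Fin n)) (p : ℕ → Prop) [DecidablePred p]
    (x : Fin n) : x ∈ (univ.filter fun t : Fin n => p t).image σ ↔ p (searchTime σ x) := by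
  rw [mem_image]
  constructor
  · rintro ⟨t, ht, rfl⟩
    simpa [searchTime] using (mem_filter.1 ht).2
  · exact fun h => ⟨σ.symm x, mem_filter.2 ⟨mem_univ _, h⟩, σ.apply_symm_apply x⟩

lemma mem_stopSet {σ : Equiv.Perm (Fin n)} {H : Finset (Fin n)} {x : Fin n} :
    x ∈ stopSet σ H ↔ searchTime σ x ≤ H.sup (searchTime σ) :=
  mem_image_filter_univ_iff σ (· ≤ H.sup (searchTime σ)) x

lemma subset_stopSet (σ : Equiv.Perm (Fin n)) (H : Finset (Fin n)) : H ⊆ stopSet σ H :=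
  fun _ hx => mem_stopSet.2 (le_sup hx)

lemma subset_compl_stopSet_iff {σ : Equiv.Perm (Fin n)} {H B : Finset (Fin n)}
    (hH : H.Nonempty) : B ⊆ (stopSet σ H)ᶜ ↔ Precedes (searchTime σ) H B := by
  obtain ⟨h₀, hh₀⟩ := hH
  refine ⟨fun hB h hh b hb => ?_, fun hB b hb => ?_⟩
  · exact (le_sup hh).trans_lt (not_le.1 (mem_compl.1 (hB hb) ∘ mem_stopSet.2))
  · refine mem_compl.2 fun hbs => (mem_stopSet.1 hbs).not_gt ?_
    exact (Finset.sup_lt_iff ((Nat.zero_le _).trans_lt (hB h₀ hh₀ b hb))).2 fun h hh => hB h hh b hb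

lemma mem_startsWith_iff {A : Finset (Fin n)} {σ : Equiv.Perm (Fin n)} :
    σ ∈ startsWith k A ↔ ∀ x, x ∈ A ↔ searchTime σ x < k := by
  simp only [startsWith, mem_filter, mem_univ, true_and, Finset.ext_iff,
    mem_image_filter_univ_iff σ (· < k)]
  exact forall_congr' fun x => Iff.comm

lemma startsWith_nonempty {A : Finset (Fin n)} (hA : #A = k) : (startsWith k A).Nonempty := by
  have hk : k ≤ n := hA ▸ (card_le_univ A).trans_eq (Fintype.card_fin n)
  have hcard : Fintype.card {t : Fin n // (t : ℕ) < k} = Fintype.card {x // x ∈ A} := by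
    rw [Fintype.card_subtype, Fin.card_filter_val_lt, Fintype.card_coe, hA, min_eq_right hk]
  let σ := (Fintype.equivOfCardEq hcard).extendSubtype
  refine ⟨σ, mem_startsWith_iff.2 fun x => ?_⟩
  obtain ⟨t, rfl⟩ := σ.surjective x
  have ht : searchTime σ (σ t) = t := by simp [searchTime]
  rw [ht]
  exact ⟨fun h => by_contra fun ht' => Equiv.extendSubtype_not_mem _ t ht' h,
    Equiv.extendSubtype_mem (Fintype.equivOfCardEq hcard) t⟩

lemma mul_mem_startsWith {A : Finset (Fin n)} {τ σ : Equiv.Perm (Fin n)}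
    (hτ : ∀ x, τ x ∈ A ↔ x ∈ A) (hσ : σ ∈ startsWith k A) : τ * σ ∈ startsWith k A := by
  refine mem_startsWith_iff.2 fun x => ?_
  obtain ⟨y, rfl⟩ := τ.surjective x
  rw [hτ, searchTime_mul_apply]
  exact mem_startsWith_iff.1 hσ y

lemma precedes_image_iff (τ σ : Equiv.Perm (Fin n)) (P Q : Finset (Fin n)) :
    Precedes (searchTime (τ * σ)) (P.image τ) (Q.image τ) ↔ Precedes (searchTime σ) P Q := by
  simp [Precedes]

lemma card_filter_precedes_image {A P Q : Finset (Fin n)} {τ : Equiv.Perm (Fin n)}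
    (hτ : ∀ x, τ x ∈ A ↔ x ∈ A) :
    #{σ ∈ startsWith k A | Precedes (searchTime σ) (P.image τ) (Q.image τ)} =
      #{σ ∈ startsWith k A | Precedes (searchTime σ) P Q} := by
  have hτ' : ∀ x, τ⁻¹ x ∈ A ↔ x ∈ A := fun x => by
    rw [← hτ]; simp
  refine card_nbij' (τ⁻¹ * ·) (τ * ·) (fun σ hσ => ?_) (fun σ hσ => ?_)
    (fun σ _ => by simp) (fun σ _ => by simp)
  · obtain ⟨hσA, hσP⟩ := mem_filter.1 hσ
    refine mem_filter.2 ⟨mul_mem_startsWith hτ' hσA, ?_⟩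
    rwa [← precedes_image_iff τ, mul_inv_cancel_left]
  · obtain ⟨hσA, hσP⟩ := mem_filter.1 hσ
    exact mem_filter.2 ⟨mul_mem_startsWith hτ hσA, (precedes_image_iff τ σ P Q).2 hσP⟩

end Search

section Equidistribution

variable {n k : ℕ} {A : Finset (Fin n)}

/-- The transposition of a point of `F \ F'` with one of `F' \ F` preserves `A` and moves `F`
one step towards `F'`. -/
lemma card_filter_precedes_sdiff_eq {V F F' : Finset (Fin n)} (hVA : Disjoint V A) (hF : F ⊆ V)
    (hF' : F' ⊆ V) (hcard : #F = #F') :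
    #{σ ∈ startsWith k A | Precedes (searchTime σ) F (V \ F)} =
      #{σ ∈ startsWith k A | Precedes (searchTime σ) F' (V \ F')} := by
  induction hd : #(F \ F') generalizing F with
  | zero =>
    rw [card_eq_zero, sdiff_eq_empty_iff_subset] at hd
    rw [eq_of_subset_of_card_le hd hcard.ge]
  | succ d ih =>
    obtain ⟨x, hx⟩ : (F \ F').Nonempty := card_pos.1 (by omega)
    obtain ⟨y, hy⟩ : (F' \ F).Nonempty := card_pos.1 (by rw [card_sdiff_comm hcard.symm]; omega)
    obtain ⟨hxF, hxF'⟩ := mem_sdiff.1 hx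
    obtain ⟨hyF', hyF⟩ := mem_sdiff.1 hy
    set τ := Equiv.swap x y
    have hτA : ∀ a, τ a ∈ A ↔ a ∈ A := by
      have hbij := Equiv.swap_bijOn_self (s := (A : Set (Fin n)))
        (iff_of_false (disjoint_left.1 hVA (hF hxF)) (disjoint_left.1 hVA (hF' hyF')))
      exact fun a => ⟨fun h => by simpa [τ] using hbij.mapsTo h, fun h => hbij.mapsTo h⟩
    have hτV : V.image τ = V := coe_injective <| by
      rw [coe_image]
      exact (Equiv.swap_bijOn_self (iff_of_true (hF hxF) (hF' hyF'))).image_eq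
    have hτF : F.image τ = insert y (F.erase x) := coe_injective <| by
      rw [coe_image, coe_insert, coe_erase]
      exact (Equiv.swap_bijOn_exchange hxF hyF).image_eq
    rw [← card_filter_precedes_image hτA, image_sdiff _ _ τ.injective, hτV]
    refine ih (hτV ▸ image_subset_image hF) ?_ ?_
    · rw [card_image_of_injective _ τ.injective, hcard]
    · rw [hτF, insert_sdiff_of_mem _ hyF', erase_sdiff_comm, card_erase_of_mem hx, hd]
      rfl

lemma sum_card_filter_precedes_sdiff {V : Finset (Fin n)} {p : ℕ} (hp : p ≤ #V) :
    ∑ F ∈ powersetCard p V, #{σ ∈ startsWith k A | Precedes (searchTime σ) F (V \ F)} =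
      #(startsWith k A) := by
  simp only [card_filter]
  rw [sum_comm]
  refine (sum_congr rfl fun σ _ => ?_).trans (card_eq_sum_ones _).symm
  rw [← card_filter, card_filter_precedes_sdiff ((searchTime_injective σ).injOn) hp]

/-- Every search has exactly one `#P`-subset of `P ∪ Q` that it searches before the rest, and
all these subsets are equally likely. -/
lemma card_filter_precedes_mul_choose {P Q : Finset (Fin n)} (hPQ : Disjoint P Q)
    (hA : Disjoint (P ∪ Q) A) :
    #{σ ∈ startsWith k A | Precedes (searchTime σ) P Q} * (#P + #Q).choose #P =
      #(startsWith k A) := by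
  have hQ : (P ∪ Q) \ P = Q := union_sdiff_cancel_left hPQ
  have hV : #(P ∪ Q) = #P + #Q := card_union_of_disjoint hPQ
  rw [← sum_card_filter_precedes_sdiff (V := P ∪ Q) (p := #P) (by omega), mul_comm, ← hV,
    ← card_powersetCard, ← smul_eq_mul, ← sum_const]
  refine sum_congr rfl fun F hF => ?_
  obtain ⟨hFV, hFP⟩ := mem_powersetCard.1 hF
  have := card_filter_precedes_sdiff_eq (k := k) hA subset_union_left hFV hFP.symm
  rwa [hQ] at this

end Equidistribution

section Identities

variable {n k : ℕ} (z : Fin n → ℝ)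

lemma sum_prod_mul_T_compl_stopSet (σ : Equiv.Perm (Fin n)) (hk : 1 ≤ k) (m : ℕ) :
    ∑ A ∈ powersetCard k univ, (∏ i ∈ A, z i) * T z m (stopSet σ A)ᶜ = T z (k + m) univ := by
  have hsplit : ∀ A ∈ powersetCard k univ, (∏ i ∈ A, z i) * T z m (stopSet σ A)ᶜ =
      ∑ B ∈ powersetCard m Aᶜ,
        (∏ i ∈ A ∪ B, z i) * if Precedes (searchTime σ) A B then 1 else 0 := by
    intro A hA
    have hAne : A.Nonempty := card_pos.1 ((mem_powersetCard.1 hA).2 ▸ hk)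
    rw [T_eq_sum_ite z (compl_subset_compl.2 (subset_stopSet σ A)) m, mul_sum]
    refine sum_congr rfl fun B _ => ?_
    simp only [subset_compl_stopSet_iff hAne]
    split_ifs with h
    · rw [prod_union h.disjoint, mul_one]
    · rw [mul_zero, mul_zero]
  rw [sum_congr rfl hsplit, sum_prod_union_mul_sum_powersetCard_compl, T]
  refine sum_congr rfl fun D hD => ?_
  have hkD : k ≤ #D := by rw [(mem_powersetCard.1 hD).2]; omega
  rw [sum_boole, card_filter_precedes_sdiff (searchTime_injective σ).injOn hkD, Nat.cast_one,
    mul_one]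

lemma sum_ite_disjoint_inv_choose {α : Type*} [DecidableEq α] {m : ℕ} {H D : Finset α}
    (hH : #H = k) (hD : #D = k + m) :
    ∑ A ∈ powersetCard k D,
      (if Disjoint H (D \ A) then ((#(H \ A) + m).choose #(H \ A) : ℝ)⁻¹ else 0) = 1 := by
  have hh : #(H ∩ D) ≤ k := hH ▸ card_le_card inter_subset_left
  have hterm : ∀ A ∈ powersetCard k D,
      (if Disjoint H (D \ A) then ((#(H \ A) + m).choose #(H \ A) : ℝ)⁻¹ else 0) =
        if H ∩ D ⊆ A then ((k - #(H ∩ D) + m).choose (k - #(H ∩ D)) : ℝ)⁻¹ else 0 := by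
    intro A hA
    have hAD := (mem_powersetCard.1 hA).1
    have hiff : Disjoint H (D \ A) ↔ H ∩ D ⊆ A := by
      simp only [disjoint_left, subset_iff, mem_inter, mem_sdiff, not_and, not_not, and_imp]
    by_cases hHA : H ∩ D ⊆ A
    · have hHAD : H ∩ A = H ∩ D :=
        (inter_subset_inter_left hAD).antisymm fun x hx => mem_inter.2 ⟨(mem_inter.1 hx).1, hHA hx⟩
      have hcard : #(H \ A) = k - #(H ∩ D) := by
        have := card_sdiff_add_card_inter H A
        rw [hHAD, hH] at this
        omega
      rw [if_pos (hiff.2 hHA), if_pos hHA, hcard]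
    · rw [if_neg (mt hiff.1 hHA), if_neg hHA]
  rw [sum_congr rfl hterm, ← sum_filter, sum_const,
    card_filter_powersetCard_subset _ _ _ inter_subset_right hh, nsmul_eq_mul, hD,
    show k + m - #(H ∩ D) = k - #(H ∩ D) + m by omega, mul_inv_cancel₀]
  exact Nat.cast_ne_zero.2 (Nat.choose_pos (by omega)).ne'

lemma sum_prod_mul_T_compl_union_div_choose {H : Finset (Fin n)} (hH : #H = k) (m : ℕ) :
    ∑ A ∈ powersetCard k univ,
      (∏ i ∈ A, z i) * (T z m (A ∪ H)ᶜ / (#(H \ A) + m).choose #(H \ A)) =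
      T z (k + m) univ := by
  have hsplit : ∀ A ∈ powersetCard k univ,
      (∏ i ∈ A, z i) * (T z m (A ∪ H)ᶜ / (#(H \ A) + m).choose #(H \ A)) =
      ∑ B ∈ powersetCard m Aᶜ, (∏ i ∈ A ∪ B, z i) *
        if Disjoint H B then ((#(H \ A) + m).choose #(H \ A) : ℝ)⁻¹ else 0 := by
    intro A _
    rw [T_eq_sum_ite z (compl_subset_compl.2 subset_union_left) m, div_eq_mul_inv, sum_mul,
      mul_sum]
    refine sum_congr rfl fun B hB => ?_
    have hAB : Disjoint A B := subset_compl_iff_disjoint_left.1 (mem_powersetCard.1 hB).1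
    simp only [subset_compl_iff_disjoint_left, disjoint_union_left, hAB, true_and]
    split_ifs
    · rw [prod_union hAB, mul_assoc]
    · rw [zero_mul, mul_zero, mul_zero]
  rw [sum_congr rfl hsplit, sum_prod_union_mul_sum_powersetCard_compl, T]
  exact sum_congr rfl fun D hD =>
    by rw [sum_ite_disjoint_inv_choose hH (mem_powersetCard.1 hD).2, mul_one]

end Identities

section Expectation

variable {n k : ℕ}

lemma precedes_iff_of_mem_startsWith {A H B : Finset (Fin n)} {σ : Equiv.Perm (Fin n)}
    (hσ : σ ∈ startsWith k A) (hH : #H = k) :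
    Precedes (searchTime σ) H B ↔
      Disjoint (A ∪ H) B ∧ Precedes (searchTime σ) (H \ A) B := by
  have hA := mem_startsWith_iff.1 hσ
  constructor
  · intro h
    refine ⟨disjoint_union_left.2 ⟨disjoint_right.2 fun b hb hbA => ?_, h.disjoint⟩,
      fun a ha => h a (mem_sdiff.1 ha).1⟩
    have hle : #H ≤ searchTime σ b := by
      simpa using card_le_card_of_injOn (searchTime σ) (t := range (searchTime σ b))
        (fun a ha => mem_range.2 (h a ha b hb)) (searchTime_injective σ).injOn
    exact (hle.trans_lt ((hA b).1 hbA)).ne (by rw [hH])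
  · rintro ⟨hd, hp⟩ a ha b hb
    have hbA : k ≤ searchTime σ b :=
      not_lt.1 fun hlt => disjoint_left.1 hd (mem_union_left H ((hA b).2 hlt)) hb
    by_cases haA : a ∈ A
    · exact ((hA a).1 haA).trans_le hbA
    · exact hp a (mem_sdiff.2 ⟨ha, haA⟩) b hb

variable (z : Fin n → ℝ)

lemma sum_startsWith_T_compl_stopSet {A H : Finset (Fin n)} (hk : 1 ≤ k) (hH : #H = k) (m : ℕ) :
    ∑ σ ∈ startsWith k A, T z m (stopSet σ H)ᶜ =
      #(startsWith k A) * (T z m (A ∪ H)ᶜ / (#(H \ A) + m).choose #(H \ A)) := by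
  have hHne : H.Nonempty := card_pos.1 (hH ▸ hk)
  have hB : ∀ B ∈ powersetCard m univ,
      ∑ σ ∈ startsWith k A, (if B ⊆ (stopSet σ H)ᶜ then ∏ i ∈ B, z i else 0) =
        #(startsWith k A) * ((if B ⊆ (A ∪ H)ᶜ then ∏ i ∈ B, z i else 0) /
          (#(H \ A) + m).choose #(H \ A)) := by
    intro B hB
    rw [← sum_filter, sum_const, nsmul_eq_mul]
    have hiff : ∀ σ ∈ startsWith k A, B ⊆ (stopSet σ H)ᶜ ↔
        Disjoint (A ∪ H) B ∧ Precedes (searchTime σ) (H \ A) B := fun σ hσ =>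
      (subset_compl_stopSet_iff hHne).trans (precedes_iff_of_mem_startsWith hσ hH)
    by_cases hd : Disjoint (A ∪ H) B
    · rw [if_pos (subset_compl_iff_disjoint_left.2 hd)]
      have hcount := card_filter_precedes_mul_choose (k := k) (P := H \ A) (Q := B)
        (disjoint_of_subset_left sdiff_subset (disjoint_union_left.1 hd).2)
        (disjoint_union_left.2 ⟨sdiff_disjoint, (disjoint_union_left.1 hd).1.symm⟩)
      rw [(mem_powersetCard.1 hB).2, ← filter_congr fun σ hσ => (hiff σ hσ).trans
        (and_iff_right hd)] at hcount
      have hC : ((#(H \ A) + m).choose #(H \ A) : ℝ) ≠ 0 :=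
        Nat.cast_ne_zero.2 (Nat.choose_pos (Nat.le_add_right _ _)).ne'
      rw [← hcount, Nat.cast_mul, mul_right_comm, mul_assoc, div_mul_cancel₀ _ hC]
    · rw [if_neg (mt subset_compl_iff_disjoint_left.1 hd),
        filter_false_of_mem fun σ hσ h => hd ((hiff σ hσ).1 h).1]
      simp
  calc ∑ σ ∈ startsWith k A, T z m (stopSet σ H)ᶜ
      = ∑ σ ∈ startsWith k A, ∑ B ∈ powersetCard m univ,
          if B ⊆ (stopSet σ H)ᶜ then ∏ i ∈ B, z i else 0 :=
        sum_congr rfl fun σ _ => T_eq_sum_ite z (subset_univ _) m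
    _ = ∑ B ∈ powersetCard m univ, #(startsWith k A) *
          ((if B ⊆ (A ∪ H)ᶜ then ∏ i ∈ B, z i else 0) / (#(H \ A) + m).choose #(H \ A)) := by
        rw [sum_comm]; exact sum_congr rfl hB
    _ = _ := by rw [← mul_sum, ← sum_div, ← T_eq_sum_ite z (subset_univ _)]

end Expectation

section Payoffs

variable {n k : ℕ} {f : Finset (Fin n) → ℝ} {z : Fin n → ℝ} {c : Fin n → ℝ}

lemma sum_prod_mul_payoff (hc : ∀ A, A.Nonempty → f A = ∑ m, c m * T z m Aᶜ) (hk : 1 ≤ k)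
    (σ : Equiv.Perm (Fin n)) :
    ∑ A ∈ powersetCard k univ, (∏ i ∈ A, z i) * payoff f σ A =
      ∑ m, c m * T z (k + m) univ := by
  have hpay : ∀ A ∈ powersetCard k univ, payoff f σ A = ∑ m, c m * T z m (stopSet σ A)ᶜ :=
    fun A hA => hc _ ((card_pos.1 ((mem_powersetCard.1 hA).2 ▸ hk)).mono (subset_stopSet σ A))
  simp_rw [sum_congr rfl fun A hA => congrArg _ (hpay A hA), mul_sum]
  rw [sum_comm]
  refine sum_congr rfl fun m _ => ?_
  simp_rw [mul_left_comm _ (c m), ← mul_sum, sum_prod_mul_T_compl_stopSet z σ hk]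

lemma sPay_eq_sum (hc : ∀ A, A.Nonempty → f A = ∑ m, c m * T z m Aᶜ) (hk : 1 ≤ k)
    {A H : Finset (Fin n)} (hA : #A = k) (hH : #H = k) :
    sPay f k A H = ∑ m, c m * (T z m (A ∪ H)ᶜ / (#(H \ A) + m).choose #(H \ A)) := by
  have hsw : (#(startsWith k A) : ℝ) ≠ 0 :=
    Nat.cast_ne_zero.2 (startsWith_nonempty hA).card_pos.ne'
  have hHne : H.Nonempty := card_pos.1 (hH ▸ hk)
  rw [sPay, div_eq_iff hsw]
  unfold payoff
  rw [sum_congr rfl fun σ _ => hc _ (hHne.mono (subset_stopSet σ H)), sum_comm, sum_mul]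
  refine sum_congr rfl fun m _ => ?_
  rw [← mul_sum, sum_startsWith_T_compl_stopSet z hk hH]
  ring

lemma sum_prod_mul_sPay (hc : ∀ A, A.Nonempty → f A = ∑ m, c m * T z m Aᶜ) (hk : 1 ≤ k)
    {H : Finset (Fin n)} (hH : #H = k) :
    ∑ A ∈ powersetCard k univ, (∏ i ∈ A, z i) * sPay f k A H =
      ∑ m, c m * T z (k + m) univ := by
  simp_rw [sum_congr rfl fun A hA => congrArg _ (sPay_eq_sum hc hk (mem_powersetCard.1 hA).2 hH),
    mul_sum]
  rw [sum_comm]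
  refine sum_congr rfl fun m _ => ?_
  simp_rw [mul_left_comm _ (c m), ← mul_sum, sum_prod_mul_T_compl_union_div_choose z hH]

end Payoffs

theorem searcher_strategy_guarantees_value_general
    {n k : ℕ} (hk1 : 1 ≤ k)
    (f : Finset (Fin n) → ℝ) (z : Fin n → ℝ) (hf : ZIndexable f z)
    (H : Finset (Fin n)) (hH : H.card = k) (σ₀ : Equiv.Perm (Fin n)) :
    ∑ A ∈ Finset.powersetCard k (Finset.univ : Finset (Fin n)),
        ((∏ i ∈ A, z i) / T z k Finset.univ) * payoff f σ₀ A ≤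
      ∑ A ∈ Finset.powersetCard k (Finset.univ : Finset (Fin n)),
        ((∏ i ∈ A, z i) / T z k Finset.univ) * sPay f k A H := by
  obtain ⟨c, hc⟩ := hf.exists_eq_sum_T_compl
  have hq : ∀ X : Finset (Fin n) → ℝ,
      ∑ A ∈ powersetCard k univ, (∏ i ∈ A, z i) / T z k univ * X A =
        (∑ A ∈ powersetCard k univ, (∏ i ∈ A, z i) * X A) / T z k univ := fun X => by
    rw [sum_div]
    exact sum_congr rfl fun A _ => div_mul_eq_mul_div _ _ _
  rw [hq, hq, sum_prod_mul_payoff hc hk1 σ₀, sum_prod_mul_sPay hc hk1 hH]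

/-- the mixed Searcher strategy that plays `s_A` with probability
`q_A = (∏_{i∈A} z_i)/T_k(S)` guarantees an expected payoff of at least
`V = Σ_A q_A P_f(A, σ₀)` (`σ₀` an arbitrary fixed search) against every Hider
pure strategy `H ∈ S^(k)`. -/
theorem searcher_strategy_guarantees_value
    {n k : ℕ} (hk1 : 1 ≤ k) (hk2 : k ≤ n - 1)
    (f : Finset (Fin n) → ℝ) (z : Fin n → ℝ) (hf : ZIndexable f z)
    (H : Finset (Fin n)) (hH : H.card = k) (σ₀ : Equiv.Perm (Fin n)) :
    ∑ A ∈ Finset.powersetCard k (Finset.univ : Finset (Fin n)),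
        ((∏ i ∈ A, z i) / T z k Finset.univ) * payoff f σ₀ A ≤
      ∑ A ∈ Finset.powersetCard k (Finset.univ : Finset (Fin n)),
        ((∏ i ∈ A, z i) / T z k Finset.univ) * sPay f k A H :=
  searcher_strategy_guarantees_value_general hk1 f z hf H hH σ₀
end

section
/- For every rooted tree G and every expanding search σ of G, the expected payoff against the tree hiding strategy satisfies P(h_G, σ) ≤ V_G; that is, the tree hiding strategy h_G guarantees that the expected payoff of the game is at most V_G, and every depth-first expanding search is a best response to h_G. -/
/-- A rooted tree with vertex probabilities: a single vertex, a root with one branch,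
or a root with two branches. -/
inductive RTree : Type
  | leaf (p : ℝ) : RTree
  | node1 (p : ℝ) (G' : RTree) : RTree
  | node2 (p : ℝ) (G₁ G₂ : RTree) : RTree

namespace RTree

/-- Validity of the probabilities: every leaf has probability in `(0,1)`, and every
internal vertex (including the root) has probability in `(0,1]`. -/
def valid : RTree → Prop
  | leaf p => 0 < p ∧ p < 1
  | node1 p G' => (0 < p ∧ p ≤ 1) ∧ valid G'
  | node2 p G₁ G₂ => (0 < p ∧ p ≤ 1) ∧ valid G₁ ∧ valid G₂

/-- `π(G)`, the product of the probabilities of all vertices of `G`. -/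
def piT : RTree → ℝ
  | leaf p => p
  | node1 p G' => p * piT G'
  | node2 p G₁ G₂ => p * (piT G₁ * piT G₂)

/-- The recursively defined value `V_G` of the game on `G`. -/
noncomputable def valT : RTree → ℝ
  | leaf p => p
  | node1 p G' => p * valT G'
  | node2 p G₁ G₂ =>
      p * (((1 - piT G₁) / valT G₁ + (1 - piT G₂) / valT G₂)⁻¹) * (1 - piT G₁ * piT G₂)

/-- The normalizing factor `λ` for a branch vertex with branches `G₁` and `G₂`. -/
noncomputable def lamT (G₁ G₂ : RTree) : ℝ :=
  ((1 - piT G₁) / valT G₁ + (1 - piT G₂) / valT G₂)⁻¹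

/-- Vertices of a rooted tree, as addresses: the root is `[]`, and the address of a
vertex in a branch is the branch direction (`false` for the first/unique branch,
`true` for the second) followed by its address within the branch. -/
def verts : RTree → List (List Bool)
  | leaf _ => [[]]
  | node1 _ G' => [] :: (verts G').map (List.cons false)
  | node2 _ G₁ G₂ => [] :: ((verts G₁).map (List.cons false) ++ (verts G₂).map (List.cons true))

/-- The success probability of the vertex at a given address. -/
def pAt : RTree → List Bool → ℝ
  | leaf p, _ => p
  | node1 p _, [] => p
  | node1 _ G', _ :: l => pAt G' l
  | node2 p _ _, [] => p
  | node2 _ G₁ _, false :: l => pAt G₁ l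
  | node2 _ _ G₂, true :: l => pAt G₂ l

/-- The subtree `G(v)` rooted at the vertex with address `v` (if it exists). -/
def sub? : RTree → List Bool → Option RTree
  | t, [] => some t
  | leaf _, _ :: _ => none
  | node1 _ G', false :: l => sub? G' l
  | node1 _ _, true :: _ => none
  | node2 _ G₁ _, false :: l => sub? G₁ l
  | node2 _ _ G₂, true :: l => sub? G₂ l

/-- The tree hiding strategy `h_G`, as a function assigning probabilities to addresses. -/
noncomputable def hide : RTree → List Bool → ℝ
  | leaf _, [] => 1
  | leaf _, _ :: _ => 0
  | node1 _ _, [] => 0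
  | node1 _ G', false :: l => hide G' l
  | node1 _ _, true :: _ => 0
  | node2 _ _ _, [] => 0
  | node2 _ G₁ G₂, false :: l => lamT G₁ G₂ * ((1 - piT G₁) / valT G₁) * hide G₁ l
  | node2 _ G₁ G₂, true :: l => lamT G₁ G₂ * ((1 - piT G₂) / valT G₂) * hide G₂ l

/-- An expanding search of `G`: an ordering of all of the vertices of `G` in which every
vertex other than the root appears after its parent (hence the root `[]` comes first). -/
def IsSearch (G : RTree) (σ : List (List Bool)) : Prop :=
  σ.Perm (verts G) ∧ ∀ a ∈ σ, a ≠ [] → σ.idxOf a.dropLast < σ.idxOf a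

/-- A depth-first expanding search: for every vertex `v`, the vertices of the subtree
`G(v)` occupy consecutive positions beginning with `v`;  equivalently, any vertex `w`
appearing between `v` and a descendant of `v` is itself a descendant of `v`. -/
def IsDFS (G : RTree) (σ : List (List Bool)) : Prop :=
  IsSearch G σ ∧ ∀ v a w, v ∈ σ → a ∈ σ → w ∈ σ → v <+: a →
    σ.idxOf v ≤ σ.idxOf w → σ.idxOf w ≤ σ.idxOf a → v <+: w

/-- `P(v,σ)`: the probability of reaching and successfully searching vertex `v`,
i.e. the product of `p` over the locations searched up to and including `v`. -/
def capProb (G : RTree) (σ : List (List Bool)) (v : List Bool) : ℝ :=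
  ((σ.take (σ.idxOf v + 1)).map (pAt G)).prod

/-- `P(x,σ) = Σ_v x(v) P(v,σ)` for a distribution `x` on the vertices. -/
def payoffD (G : RTree) (x : List Bool → ℝ) (σ : List (List Bool)) : ℝ :=
  (σ.map (fun v => x v * capProb G σ v)).sum

end RTree

/-!
Write `ρ_G = V_G / (1 - π(G))`. Along an expanding search of `G`, every initial segment `τ`
collects payoff at most `ρ_G (1 - P(τ))`, where `P(τ)` is the product of the probabilities
searched in `τ`: against `h_G` the searcher gains at most `ρ_G` per unit of probability spent.
This goes by induction on `G`. The branch weights `λ_G (1 - π(Gᵢ)) / V_{Gᵢ}` of `h_G` rescale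
the rates of both branches to `λ_G`; an interleaving of two sequences of rate `λ_G` again has
rate `λ_G`; and searching the root first turns rate `λ_G` into `ρ_G`. For a whole search
`P(σ) = π(G)`, so the payoff is at most `ρ_G (1 - π(G)) = V_G`. A depth-first search exhausts
one branch before entering the other, and then the payoff adds up to exactly `V_G`.
-/

namespace List

variable {α β : Type*}

section SeqPayoff

variable (p x : α → ℝ)

-- `∑ᵢ x sᵢ * p s₀ * ⋯ * p sᵢ`: the payoff of searching the vertices in the order `s`
def seqPayoff : List α → ℝ
  | [] => 0
  | a :: s => p a * (x a + seqPayoff s)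

@[simp] lemma seqPayoff_nil : seqPayoff p x [] = 0 := rfl

@[simp] lemma seqPayoff_cons (a : α) (s : List α) :
    seqPayoff p x (a :: s) = p a * (x a + seqPayoff p x s) := rfl

lemma seqPayoff_append (s t : List α) :
    seqPayoff p x (s ++ t) = seqPayoff p x s + (s.map p).prod * seqPayoff p x t := by
  induction s with
  | nil => simp
  | cons a s ih => simp [ih]; ring

lemma seqPayoff_map (f : β → α) (s : List β) :
    seqPayoff p x (s.map f) = seqPayoff (p ∘ f) (x ∘ f) s := by
  induction s with
  | nil => rfl
  | cons a s ih => simp [ih]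

lemma seqPayoff_const_mul (c : ℝ) (s : List α) :
    seqPayoff p (fun a => c * x a) s = c * seqPayoff p x s := by
  induction s with
  | nil => simp
  | cons a s ih => simp [ih]; ring

def RateBounded (L : ℝ) (s : List α) : Prop :=
  ∀ t, t <+: s → seqPayoff p x t ≤ L * (1 - (t.map p).prod)

variable {p x}

lemma RateBounded.of_prefix {L : ℝ} {s t : List α} (h : RateBounded p x L s) (ht : t <+: s) :
    RateBounded p x L t :=
  fun u hu => h u (hu.trans ht)

lemma rateBounded_map_iff {L : ℝ} (f : β → α) (s : List β) :
    RateBounded p x L (s.map f) ↔ RateBounded (p ∘ f) (x ∘ f) L s := by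
  simp only [RateBounded, prefix_map_iff]
  constructor
  · intro h t ht
    simpa [seqPayoff_map] using h _ ⟨t, ht, rfl⟩
  · rintro h _ ⟨t, ht, rfl⟩
    simpa [seqPayoff_map] using h t ht

lemma RateBounded.const_mul {L c : ℝ} {s : List α} (h : RateBounded p x L s) (hc : 0 ≤ c) :
    RateBounded p (fun a => c * x a) (c * L) s := fun t ht => by
  rw [seqPayoff_const_mul, mul_assoc]
  exact mul_le_mul_of_nonneg_left (h t ht) hc

lemma prod_map_nonneg (hp : ∀ a, 0 ≤ p a) (s : List α) : 0 ≤ (s.map p).prod :=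
  prod_nonneg fun _ hb => by
    obtain ⟨a, -, rfl⟩ := mem_map.1 hb
    exact hp a

lemma prod_map_le_one (hp : ∀ a, p a ∈ Set.Icc 0 1) (s : List α) : (s.map p).prod ≤ 1 := by
  simpa using prod_map_le_prod_map₀ p (fun _ => 1) (fun a _ => (hp a).1) fun a _ => (hp a).2

lemma prod_map_le_of_prefix (hp : ∀ a, p a ∈ Set.Icc 0 1) {s t : List α} (ht : t <+: s) :
    (s.map p).prod ≤ (t.map p).prod := by
  obtain ⟨u, rfl⟩ := ht
  rw [map_append, prod_append]
  exact mul_le_of_le_one_right (prod_map_nonneg (fun a => (hp a).1) t) (prod_map_le_one hp u)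

lemma RateBounded.cons (hp : ∀ a, p a ∈ Set.Icc 0 1) {L : ℝ} (hL : 0 ≤ L) {a : α}
    {s : List α} (h : RateBounded p x L s) (hxa : x a = 0) (hπ : p a * (s.map p).prod < 1) :
    RateBounded p x (p a * L * (1 - (s.map p).prod) / (1 - p a * (s.map p).prod)) (a :: s) := by
  intro u hu
  rcases prefix_cons_iff.1 hu with rfl | ⟨t, rfl, ht⟩
  · simp
  set π := (s.map p).prod
  have hpa := hp a
  -- with `S`, `q` the payoff and the product over `t`, the slack is
  -- `p a * (1 - p a * π) * (L * (1 - q) - S) + p a * L * (1 - p a) * (q - π)`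
  have hbound := mul_le_mul_of_nonneg_left (h t ht) (mul_nonneg hpa.1 (sub_nonneg.2 hπ.le))
  have hloss := mul_le_mul_of_nonneg_left (prod_map_le_of_prefix hp ht)
    (mul_nonneg (mul_nonneg hpa.1 hL) (sub_nonneg.2 hpa.2))
  rw [seqPayoff_cons, hxa, zero_add, map_cons, prod_cons, div_mul_eq_mul_div,
    le_div_iff₀ (by linarith)]
  linear_combination hbound + hloss

lemma prod_map_filter_mul_filter_not (c : α → Bool) (s : List α) :
    ((s.filter c).map p).prod * ((s.filter (!c ·)).map p).prod = (s.map p).prod := by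
  simpa using prod_map_filter_mul_prod_map_filter_not (fun a => c a = true) p s

lemma seqPayoff_le_of_filter (hp : ∀ a, p a ∈ Set.Icc 0 1) (c : α → Bool) {L : ℝ}
    (s : List α) (h₁ : RateBounded p x L (s.filter c))
    (h₂ : RateBounded p x L (s.filter (!c ·))) :
    seqPayoff p x s ≤
      L * (1 - ((s.filter c).map p).prod) * (1 - ((s.filter (!c ·)).map p).prod)
        + ((s.filter (!c ·)).map p).prod * seqPayoff p x (s.filter c)
        + ((s.filter c).map p).prod * seqPayoff p x (s.filter (!c ·)) := by
  induction s using reverseRecOn with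
  | nil => simp
  | append_singleton s a ih =>
    have hs := prefix_append s [a]
    have ih := ih (h₁.of_prefix (hs.filter _)) (h₂.of_prefix (hs.filter _))
    have b₁ := h₁ _ (hs.filter _)
    have b₂ := h₂ _ (hs.filter _)
    have hsplit := prod_map_filter_mul_filter_not (p := p) c s
    have hq₁ := prod_map_nonneg (fun a => (hp a).1) (s.filter c)
    have hq₂ := prod_map_nonneg (fun a => (hp a).1) (s.filter (!c ·))
    have hpa := hp a
    -- appending a vertex of one branch adds `Q * (1 - p a) * (L * (1 - Q') - S')` to the slack,
    -- with `Q` the product over that branch and `Q'`, `S'` product and payoff of the other one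
    rw [seqPayoff_append, ← hsplit]
    cases hca : c a
    · have hgain := mul_le_mul_of_nonneg_left b₁ (mul_nonneg hq₂ (sub_nonneg.2 hpa.2))
      simp only [filter_append, filter_singleton, hca, Bool.not_false, cond_true, cond_false,
        append_nil, seqPayoff_append, map_append, prod_append, map_cons, map_nil, prod_cons,
        prod_nil, seqPayoff_cons, seqPayoff_nil]
      linear_combination ih + hgain
    · have hgain := mul_le_mul_of_nonneg_left b₂ (mul_nonneg hq₁ (sub_nonneg.2 hpa.2))
      simp only [filter_append, filter_singleton, hca, Bool.not_true, cond_true, cond_false,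
        append_nil, seqPayoff_append, map_append, prod_append, map_cons, map_nil, prod_cons,
        prod_nil, seqPayoff_cons, seqPayoff_nil]
      linear_combination ih + hgain

lemma RateBounded.of_filter (hp : ∀ a, p a ∈ Set.Icc 0 1) (c : α → Bool) {L : ℝ}
    {s : List α} (h₁ : RateBounded p x L (s.filter c))
    (h₂ : RateBounded p x L (s.filter (!c ·))) : RateBounded p x L s := by
  intro t ht
  have h₁ := h₁.of_prefix (ht.filter _)
  have h₂ := h₂.of_prefix (ht.filter _)
  have e₁ := mul_le_mul_of_nonneg_left (h₁ _ prefix_rfl)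
    (prod_map_nonneg (fun a => (hp a).1) (t.filter (!c ·)))
  have e₂ := mul_le_mul_of_nonneg_left (h₂ _ prefix_rfl)
    (prod_map_nonneg (fun a => (hp a).1) (t.filter c))
  rw [← prod_map_filter_mul_filter_not c t]
  linear_combination seqPayoff_le_of_filter hp c t h₁ h₂ + e₁ + e₂

end SeqPayoff

lemma pairwise_of_idxOf_lt [BEq α] [LawfulBEq α] {R : α → α → Prop} {l : List α}
    (hl : l.Nodup) (h : ∀ x ∈ l, ∀ y ∈ l, l.idxOf x < l.idxOf y → R x y) : l.Pairwise R := by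
  induction l with
  | nil => exact Pairwise.nil
  | cons a l ih =>
    obtain ⟨ha, hl⟩ := nodup_cons.1 hl
    have hidx : ∀ y ∈ l, (a :: l).idxOf y = l.idxOf y + 1 := fun y hy =>
      idxOf_cons_ne l fun hya => ha (hya ▸ hy)
    refine pairwise_cons.2 ⟨fun y hy => h a mem_cons_self y (mem_cons_of_mem a hy) ?_,
      ih hl fun x hx y hy hxy => h x (mem_cons_of_mem a hx) y (mem_cons_of_mem a hy) ?_⟩
    · rw [idxOf_cons_self, hidx y hy]
      exact Nat.succ_pos _
    · rw [hidx x hx, hidx y hy]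
      exact Nat.succ_lt_succ hxy

lemma eq_filter_append_filter_not_of_pairwise (q : α → Bool) {l : List α}
    (h : l.Pairwise fun x y => q y → q x) : l = l.filter q ++ l.filter (!q ·) := by
  induction l with
  | nil => rfl
  | cons a l ih =>
    obtain ⟨ha, hl⟩ := pairwise_cons.1 h
    cases hqa : q a
    · have hl_not : ∀ y ∈ l, q y = false := fun y hy => by
        simpa [hqa] using mt (ha y hy)
      have hfilter : l.filter (!q ·) = l := filter_eq_self.2 fun y hy => by simp [hl_not y hy]
      simpa [hqa, hfilter] using hl_not
    · simpa [filter_cons, hqa] using ih hl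

end List

namespace RTree

open List

section Probabilities

variable {G : RTree}

lemma pAt_mem_Icc (hG : G.valid) (v : List Bool) : pAt G v ∈ Set.Icc 0 1 := by
  induction G generalizing v with
  | leaf p => exact ⟨hG.1.le, hG.2.le⟩
  | node1 p G' ih =>
    rcases v with _ | ⟨b, l⟩
    · exact ⟨hG.1.1.le, hG.1.2⟩
    · exact ih hG.2 l
  | node2 p G₁ G₂ ih₁ ih₂ =>
    rcases v with _ | ⟨_ | _, l⟩
    · exact ⟨hG.1.1.le, hG.1.2⟩
    · exact ih₁ hG.2.1 l
    · exact ih₂ hG.2.2 l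

lemma piT_pos (hG : G.valid) : 0 < piT G := by
  induction G with
  | leaf p => exact hG.1
  | node1 p G' ih => exact mul_pos hG.1.1 (ih hG.2)
  | node2 p G₁ G₂ ih₁ ih₂ => exact mul_pos hG.1.1 (mul_pos (ih₁ hG.2.1) (ih₂ hG.2.2))

lemma piT_lt_one (hG : G.valid) : piT G < 1 := by
  induction G with
  | leaf p => exact hG.2
  | node1 p G' ih => exact mul_lt_one_of_nonneg_of_lt_one_right hG.1.2 (piT_pos hG.2).le (ih hG.2)
  | node2 p G₁ G₂ ih₁ ih₂ =>
    exact mul_lt_one_of_nonneg_of_lt_one_right hG.1.2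
      (mul_pos (piT_pos hG.2.1) (piT_pos hG.2.2)).le
      (mul_lt_one_of_nonneg_of_lt_one_right (ih₁ hG.2.1).le (piT_pos hG.2.2).le (ih₂ hG.2.2))

lemma valT_pos (hG : G.valid) : 0 < valT G := by
  induction G with
  | leaf p => exact hG.1
  | node1 p G' ih => exact mul_pos hG.1.1 (ih hG.2)
  | node2 p G₁ G₂ ih₁ ih₂ =>
    have hπ : piT G₁ * piT G₂ < 1 :=
      mul_lt_one_of_nonneg_of_lt_one_right (piT_lt_one hG.2.1).le (piT_pos hG.2.2).le
        (piT_lt_one hG.2.2)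
    have hlam : 0 < lamT G₁ G₂ :=
      inv_pos.2 (add_pos (div_pos (sub_pos.2 (piT_lt_one hG.2.1)) (ih₁ hG.2.1))
        (div_pos (sub_pos.2 (piT_lt_one hG.2.2)) (ih₂ hG.2.2)))
    exact mul_pos (mul_pos hG.1.1 hlam) (sub_pos.2 hπ)

lemma lamT_pos {G₁ G₂ : RTree} (h₁ : G₁.valid) (h₂ : G₂.valid) : 0 < lamT G₁ G₂ :=
  inv_pos.2 (add_pos (div_pos (sub_pos.2 (piT_lt_one h₁)) (valT_pos h₁))
    (div_pos (sub_pos.2 (piT_lt_one h₂)) (valT_pos h₂)))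

noncomputable def rate (G : RTree) : ℝ := valT G / (1 - piT G)

lemma rate_nonneg (hG : G.valid) : 0 ≤ rate G :=
  div_nonneg (valT_pos hG).le (sub_pos.2 (piT_lt_one hG)).le

lemma rate_mul_one_sub_piT (hG : G.valid) : rate G * (1 - piT G) = valT G :=
  div_mul_cancel₀ _ (sub_pos.2 (piT_lt_one hG)).ne'

end Probabilities

def branch (G₁ G₂ : RTree) : Bool → RTree
  | false => G₁
  | true => G₂

-- the total probability that `h_G` hides in branch `b`
noncomputable def branchWeight (G₁ G₂ : RTree) (b : Bool) : ℝ :=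
  lamT G₁ G₂ * ((1 - piT (branch G₁ G₂ b)) / valT (branch G₁ G₂ b))

section Branches

variable {p : ℝ} {G₁ G₂ : RTree}

lemma valid_branch (hG : (node2 p G₁ G₂).valid) (b : Bool) : (branch G₁ G₂ b).valid := by
  cases b
  exacts [hG.2.1, hG.2.2]

lemma pAt_node2_comp_cons (b : Bool) :
    pAt (node2 p G₁ G₂) ∘ cons b = pAt (branch G₁ G₂ b) := by
  cases b <;> rfl

lemma hide_node2_comp_cons (b : Bool) :
    hide (node2 p G₁ G₂) ∘ cons b =
      fun l => branchWeight G₁ G₂ b * hide (branch G₁ G₂ b) l := by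
  cases b <;> rfl

lemma valT_node2 : valT (node2 p G₁ G₂) = p * lamT G₁ G₂ * (1 - piT G₁ * piT G₂) := rfl

lemma piT_branch_mul_piT_branch_not (b : Bool) :
    piT (branch G₁ G₂ b) * piT (branch G₁ G₂ !b) = piT G₁ * piT G₂ := by
  cases b
  exacts [rfl, mul_comm _ _]

lemma branchWeight_nonneg (hG : (node2 p G₁ G₂).valid) (b : Bool) :
    0 ≤ branchWeight G₁ G₂ b :=
  mul_nonneg (lamT_pos hG.2.1 hG.2.2).le (div_nonneg
    (sub_nonneg.2 (piT_lt_one (valid_branch hG b)).le) (valT_pos (valid_branch hG b)).le)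

lemma branchWeight_mul_valT (hG : (node2 p G₁ G₂).valid) (b : Bool) :
    branchWeight G₁ G₂ b * valT (branch G₁ G₂ b) =
      lamT G₁ G₂ * (1 - piT (branch G₁ G₂ b)) := by
  have := (valT_pos (valid_branch hG b)).ne'
  simp only [branchWeight]
  field_simp

end Branches

def untag (b : Bool) : List (List Bool) → List (List Bool) :=
  filterMap fun a => if a.head? = some b then some a.tail else none

section Untag

variable (b : Bool)

@[simp] lemma untag_nil : untag b [] = [] := rfl

@[simp] lemma untag_cons_nil (s : List (List Bool)) : untag b ([] :: s) = untag b s := by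
  simp [untag]

@[simp] lemma untag_cons_cons (c : Bool) (l : List Bool) (s : List (List Bool)) :
    untag b ((c :: l) :: s) = if c = b then l :: untag b s else untag b s := by
  by_cases h : c = b <;> simp [untag, h]

lemma untag_append (s t : List (List Bool)) : untag b (s ++ t) = untag b s ++ untag b t :=
  filterMap_append

lemma untag_map_cons (c : Bool) (s : List (List Bool)) :
    untag b (s.map (cons c)) = if c = b then s else [] := by
  induction s with
  | nil => simp
  | cons l s ih => by_cases h : c = b <;> simp_all

lemma mem_untag {s : List (List Bool)} {x : List Bool} : x ∈ untag b s ↔ b :: x ∈ s := by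
  induction s with
  | nil => simp
  | cons a s ih =>
    rcases a with _ | ⟨c, l⟩
    · simp [ih]
    · by_cases h : c = b <;> simp_all [eq_comm]

lemma map_cons_untag (s : List (List Bool)) :
    (untag b s).map (cons b) = s.filter (·.head? == some b) := by
  induction s with
  | nil => rfl
  | cons a s ih =>
    rcases a with _ | ⟨c, l⟩
    · simp [ih]
    · by_cases h : c = b <;> simp_all

lemma idxOf_untag_lt_iff (s : List (List Bool)) (x y : List Bool) :
    (untag b s).idxOf x < (untag b s).idxOf y ↔ s.idxOf (b :: x) < s.idxOf (b :: y) := by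
  induction s with
  | nil => simp
  | cons a s ih =>
    rcases a with _ | ⟨c, l⟩
    · simp [ih]
    · by_cases h : c = b
      · subst h
        by_cases hx : l = x
        · subst hx
          by_cases hy : l = y <;> simp [hy]
        · by_cases hy : l = y <;> simp [idxOf_cons, hx, hy, ih]
      · simp [h, ih]

lemma idxOf_untag_le_iff (s : List (List Bool)) (x y : List Bool) :
    (untag b s).idxOf x ≤ (untag b s).idxOf y ↔ s.idxOf (b :: x) ≤ s.idxOf (b :: y) := by
  simpa only [not_lt] using (idxOf_untag_lt_iff b s y x).not

end Untag

section Searches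

variable {G : RTree} {σ : List (List Bool)}

lemma nil_mem_verts (G : RTree) : [] ∈ verts G := by
  cases G <;> simp [verts]

lemma verts_nodup (G : RTree) : (verts G).Nodup := by
  have hcons : ∀ b : Bool, Function.Injective (cons b) := fun b _ _ h => (cons.inj h).2
  induction G with
  | leaf p => simp [verts]
  | node1 p G' ih => simpa [verts] using ih.map (hcons false)
  | node2 p G₁ G₂ ih₁ ih₂ =>
    simp only [verts, nodup_cons, mem_append, mem_map, reduceCtorEq, and_false, exists_false,
      or_self, not_false_eq_true, true_and]
    refine nodup_append.2 ⟨ih₁.map (hcons false), ih₂.map (hcons true), ?_⟩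
    simp

lemma prod_map_pAt_verts (G : RTree) : ((verts G).map (pAt G)).prod = piT G := by
  induction G with
  | leaf p => simp [verts, pAt, piT]
  | node1 p G' ih =>
    simp only [verts, map_cons, map_map, prod_cons, piT, ← ih]
    rfl
  | node2 p G₁ G₂ ih₁ ih₂ =>
    simp only [verts, map_cons, map_append, map_map, prod_cons, prod_append, piT, ← ih₁,
      ← ih₂]
    rfl

lemma untag_verts_node1 {p : ℝ} {G' : RTree} : untag false (verts (node1 p G')) = verts G' := by
  simp [verts, untag_map_cons]

lemma untag_verts_node2 {p : ℝ} {G₁ G₂ : RTree} (b : Bool) :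
    untag b (verts (node2 p G₁ G₂)) = verts (branch G₁ G₂ b) := by
  cases b <;> simp [verts, untag_append, untag_map_cons, branch]

lemma IsSearch.nodup (h : IsSearch G σ) : σ.Nodup :=
  h.1.nodup_iff.2 (verts_nodup G)

lemma IsSearch.prod_map_pAt (h : IsSearch G σ) : (σ.map (pAt G)).prod = piT G := by
  rw [(h.1.map _).prod_eq, prod_map_pAt_verts]

lemma IsSearch.exists_eq_nil_cons (h : IsSearch G σ) : ∃ s, σ = [] :: s ∧ [] ∉ s := by
  have hmem : [] ∈ σ := h.1.mem_iff.2 (nil_mem_verts G)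
  rcases σ with _ | ⟨a, s⟩
  · simp at hmem
  obtain rfl : a = [] := by
    by_contra ha
    simpa using h.2 a mem_cons_self ha
  exact ⟨s, rfl, (nodup_cons.1 h.nodup).1⟩

lemma IsSearch.exists_eq_singleton_of_cons_cons {a : List Bool} {s : List (List Bool)}
    (h : IsSearch G ([] :: a :: s)) : ∃ c, a = [c] := by
  rcases a with _ | ⟨c, l⟩
  · exact absurd h.nodup (by simp)
  refine ⟨c, ?_⟩
  obtain rfl | hl := eq_or_ne l []
  · rfl
  have := h.2 (c :: l) (by simp) (cons_ne_nil _ _)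
  rw [dropLast_cons_of_ne_nil hl, idxOf_cons_ne _ (cons_ne_nil _ _).symm,
    idxOf_cons_ne _ (cons_ne_nil _ _).symm, idxOf_cons_self] at this
  omega

lemma IsSearch.untag {H : RTree} (h : IsSearch G σ) (b : Bool)
    (hH : untag b (verts G) = verts H) : IsSearch H (untag b σ) := by
  refine ⟨hH ▸ h.1.filterMap _, fun x hx hne => ?_⟩
  rw [idxOf_untag_lt_iff, ← dropLast_cons_of_ne_nil hne]
  exact h.2 _ ((mem_untag b).1 hx) (cons_ne_nil _ _)

lemma IsDFS.untag {H : RTree} (h : IsDFS G σ) (b : Bool)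
    (hH : untag b (verts G) = verts H) : IsDFS H (untag b σ) := by
  refine ⟨h.1.untag b hH, fun v a w hv ha hw hva hvw hwa => ?_⟩
  rw [idxOf_untag_le_iff] at hvw hwa
  simp only [mem_untag] at hv ha hw
  exact (cons_prefix_cons.1 (h.2 _ _ _ hv ha hw (cons_prefix_cons.2 ⟨rfl, hva⟩) hvw hwa)).2

lemma IsSearch.node1_eq {p : ℝ} {G' : RTree} (h : IsSearch (node1 p G') σ) :
    σ = [] :: (RTree.untag false σ).map (cons false) := by
  obtain ⟨s, rfl, hs⟩ := h.exists_eq_nil_cons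
  rw [untag_cons_nil, map_cons_untag, filter_eq_self.2]
  intro a ha
  have : a ∈ verts (node1 p G') := h.1.mem_iff.1 (mem_cons_of_mem _ ha)
  rcases mem_cons.1 this with rfl | ha'
  · exact absurd ha hs
  · obtain ⟨l, -, rfl⟩ := mem_map.1 ha'
    simp

end Searches

lemma filter_not_head_eq (b : Bool) {s : List (List Bool)} (hs : [] ∉ s) :
    s.filter (fun a => !(a.head? == some b)) = s.filter (·.head? == some !b) := by
  refine filter_congr fun a ha => ?_
  rcases a with _ | ⟨c, l⟩
  · exact absurd ha hs
  · cases b <;> cases c <;> rfl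

lemma IsDFS.node2_eq {p : ℝ} {G₁ G₂ : RTree} {σ : List (List Bool)}
    (h : IsDFS (node2 p G₁ G₂) σ) :
    ∃ c, σ = [] :: ((RTree.untag c σ).map (cons c) ++ (RTree.untag (!c) σ).map (cons !c)) := by
  obtain ⟨s, rfl, hs⟩ := h.1.exists_eq_nil_cons
  have hnodup := (nodup_cons.1 h.1.nodup).2
  obtain ⟨c, s', rfl⟩ : ∃ c s', s = [c] :: s' := by
    have : [false] ∈ s := by
      have : [false] ∈ verts (node2 p G₁ G₂) := by simp [verts, nil_mem_verts]
      simpa using h.1.1.mem_iff.2 this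
    rcases s with _ | ⟨a, s'⟩
    · simp at this
    obtain ⟨c, rfl⟩ := h.1.exists_eq_singleton_of_cons_cons
    exact ⟨c, s', rfl⟩
  set q : List Bool → Bool := (·.head? == some c)
  -- a vertex searched between `[c]` and a descendant of `[c]` is itself a descendant of `[c]`
  have hsorted : ([c] :: s').Pairwise fun x y => q y → q x := by
    refine pairwise_of_idxOf_lt hnodup fun x hx y hy hxy hqy => ?_
    obtain ⟨yl, rfl⟩ : ∃ yl, y = c :: yl := by
      rcases y with _ | ⟨d, yl⟩
      · exact absurd hy hs
      · simp_all [q]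
    have hx₀ : x ≠ [] := fun hx₀ => hs (hx₀ ▸ hx)
    have key := h.2 [c] (c :: yl) x (by simp) (mem_cons_of_mem _ hy) (mem_cons_of_mem _ hx)
      (cons_prefix_cons.2 ⟨rfl, nil_prefix⟩)
      (by rw [idxOf_cons_ne _ hx₀.symm]; simp)
      (by rw [idxOf_cons_ne _ hx₀.symm, idxOf_cons_ne _ (cons_ne_nil _ _).symm]; omega)
    rcases x with _ | ⟨d, xl⟩
    · exact absurd rfl hx₀
    · simp [q, (cons_prefix_cons.1 key).1]
  refine ⟨c, ?_⟩
  rw [untag_cons_nil, untag_cons_nil, map_cons_untag, map_cons_untag, ← filter_not_head_eq c hs]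
  exact congrArg _ (eq_filter_append_filter_not_of_pairwise q hsorted)

lemma rateBounded_leaf {p : ℝ} (hG : (leaf p).valid) :
    [[]].RateBounded (pAt (leaf p)) (hide (leaf p)) (rate (leaf p)) := by
  have : 1 - p ≠ 0 := (sub_pos.2 hG.2).ne'
  intro u hu
  rcases prefix_cons_iff.1 hu with rfl | ⟨t, rfl, ht⟩
  · simp
  · rw [prefix_nil.1 ht]
    simp [pAt, hide, rate, valT, piT, this]

lemma rateBounded_node1 {p : ℝ} {G' : RTree} (hG : (node1 p G').valid) {t : List (List Bool)}
    (ht : IsSearch G' t) (ih : t.RateBounded (pAt G') (hide G') (rate G')) :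
    ([] :: t.map (cons false)).RateBounded (pAt (node1 p G')) (hide (node1 p G'))
      (rate (node1 p G')) := by
  have hrest : (t.map (cons false)).RateBounded (pAt (node1 p G')) (hide (node1 p G'))
      (rate G') :=
    (rateBounded_map_iff _ t).2 ih
  have hπ : ((t.map (cons false)).map (pAt (node1 p G'))).prod = piT G' := by
    rw [map_map]
    exact ht.prod_map_pAt
  have := hrest.cons (pAt_mem_Icc hG) (rate_nonneg hG.2) (a := []) rfl
    (by rw [hπ]; exact piT_lt_one hG)
  rw [hπ] at this
  convert this using 1
  have := (sub_pos.2 (piT_lt_one hG.2)).ne'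
  simp only [rate, valT, piT, pAt]
  field_simp

lemma rateBounded_node2 {p : ℝ} {G₁ G₂ : RTree} (hG : (node2 p G₁ G₂).valid)
    {s : List (List Bool)} (h : IsSearch (node2 p G₁ G₂) ([] :: s))
    (ih : ∀ b, (untag b s).RateBounded (pAt (branch G₁ G₂ b)) (hide (branch G₁ G₂ b))
      (rate (branch G₁ G₂ b))) :
    ([] :: s).RateBounded (pAt (node2 p G₁ G₂)) (hide (node2 p G₁ G₂))
      (rate (node2 p G₁ G₂)) := by
  have hs : [] ∉ s := (nodup_cons.1 h.nodup).1
  have hp := pAt_mem_Icc hG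
  have hbranch (b : Bool) : (s.filter (·.head? == some b)).RateBounded (pAt (node2 p G₁ G₂))
      (hide (node2 p G₁ G₂)) (lamT G₁ G₂) := by
    have hB := valid_branch hG b
    have hw : branchWeight G₁ G₂ b * rate (branch G₁ G₂ b) = lamT G₁ G₂ := by
      rw [rate, mul_div_assoc', branchWeight_mul_valT hG,
        mul_div_cancel_right₀ _ (sub_pos.2 (piT_lt_one hB)).ne']
    rw [← map_cons_untag, rateBounded_map_iff, pAt_node2_comp_cons, hide_node2_comp_cons, ← hw]
    exact (ih b).const_mul (branchWeight_nonneg hG b)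
  have hrest := RateBounded.of_filter hp (·.head? == some true) (hbranch true)
    (by rw [filter_not_head_eq true hs]; exact hbranch false)
  have hπ : (s.map (pAt (node2 p G₁ G₂))).prod = piT G₁ * piT G₂ :=
    mul_left_cancel₀ hG.1.1.ne' h.prod_map_pAt
  have := hrest.cons hp (lamT_pos hG.2.1 hG.2.2).le (a := []) rfl
    (by rw [hπ]; exact piT_lt_one hG)
  rwa [hπ] at this

theorem IsSearch.rateBounded {G : RTree} (hG : G.valid) {σ : List (List Bool)}
    (h : IsSearch G σ) : σ.RateBounded (pAt G) (hide G) (rate G) := by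
  induction G generalizing σ with
  | leaf p =>
    rw [perm_singleton.1 h.1]
    exact rateBounded_leaf hG
  | node1 p G' ih =>
    have ht := h.untag false untag_verts_node1
    rw [h.node1_eq]
    exact rateBounded_node1 hG ht (ih hG.2 ht)
  | node2 p G₁ G₂ ih₁ ih₂ =>
    obtain ⟨s, rfl, -⟩ := h.exists_eq_nil_cons
    refine rateBounded_node2 hG h fun b => ?_
    have hb := h.untag b (untag_verts_node2 b)
    rw [untag_cons_nil] at hb
    cases b
    exacts [ih₁ hG.2.1 hb, ih₂ hG.2.2 hb]

lemma seqPayoff_node2_map_cons {p : ℝ} {G₁ G₂ : RTree} (b : Bool) (t : List (List Bool)) :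
    (t.map (cons b)).seqPayoff (pAt (node2 p G₁ G₂)) (hide (node2 p G₁ G₂)) =
      branchWeight G₁ G₂ b *
        t.seqPayoff (pAt (branch G₁ G₂ b)) (hide (branch G₁ G₂ b)) := by
  rw [seqPayoff_map, pAt_node2_comp_cons, hide_node2_comp_cons, seqPayoff_const_mul]

theorem IsDFS.seqPayoff_eq_valT {G : RTree} (hG : G.valid) {σ : List (List Bool)}
    (h : IsDFS G σ) : σ.seqPayoff (pAt G) (hide G) = valT G := by
  induction G generalizing σ with
  | leaf p =>
    rw [perm_singleton.1 h.1.1]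
    simp [pAt, hide, valT]
  | node1 p G' ih =>
    rw [h.1.node1_eq, seqPayoff_cons, seqPayoff_map]
    exact congrArg (p * ·) ((zero_add _).trans (ih hG.2 (h.untag false untag_verts_node1)))
  | node2 p G₁ G₂ ih₁ ih₂ =>
    have ih (b : Bool) : (RTree.untag b σ).seqPayoff (pAt (branch G₁ G₂ b))
        (hide (branch G₁ G₂ b)) = valT (branch G₁ G₂ b) := by
      have hb := h.untag b (untag_verts_node2 b)
      cases b
      exacts [ih₁ hG.2.1 hb, ih₂ hG.2.2 hb]
    have hπ (b : Bool) :
        ((RTree.untag b σ).map (pAt (branch G₁ G₂ b))).prod = piT (branch G₁ G₂ b) :=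
      (h.1.untag b (untag_verts_node2 b)).prod_map_pAt
    obtain ⟨c, hσ⟩ := h.node2_eq
    rw [hσ, seqPayoff_cons, seqPayoff_append, map_map, pAt_node2_comp_cons,
      seqPayoff_node2_map_cons, seqPayoff_node2_map_cons, ih, ih, hπ, branchWeight_mul_valT hG,
      branchWeight_mul_valT hG, valT_node2, ← piT_branch_mul_piT_branch_not c]
    change p * (0 + _) = _
    ring

section Payoff

variable {G : RTree}

lemma capProb_cons_self (a : List Bool) (s : List (List Bool)) :
    capProb G (a :: s) a = pAt G a := by
  simp [capProb]

lemma capProb_cons_of_ne {a v : List Bool} (s : List (List Bool)) (h : v ≠ a) :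
    capProb G (a :: s) v = pAt G a * capProb G s v := by
  simp [capProb, idxOf_cons_ne _ h.symm]

lemma payoffD_eq_seqPayoff (x : List Bool → ℝ) {σ : List (List Bool)} (hσ : σ.Nodup) :
    payoffD G x σ = σ.seqPayoff (pAt G) x := by
  induction σ with
  | nil => rfl
  | cons a s ih =>
    obtain ⟨ha, hs⟩ := nodup_cons.1 hσ
    have hcap : s.map (fun v => x v * capProb G (a :: s) v) =
        s.map (fun v => pAt G a * (x v * capProb G s v)) :=
      map_congr_left fun v hv => by
        rw [capProb_cons_of_ne s (ne_of_mem_of_not_mem hv ha)]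
        ring
    rw [payoffD, map_cons, sum_cons, capProb_cons_self, hcap, sum_map_mul_left, ← payoffD, ih hs,
      seqPayoff_cons]
    ring

end Payoff

end RTree

open RTree in
/-- the tree hiding strategy `h_G` guarantees an expected payoff of at
most `V_G` against every expanding search, and every depth-first expanding search is a
best response to `h_G` (achieving the payoff `V_G` exactly). -/
theorem hiding_strategy_guarantee (G : RTree) (hG : G.valid) :
    (∀ σ : List (List Bool), IsSearch G σ → payoffD G (hide G) σ ≤ G.valT) ∧
    (∀ σ : List (List Bool), IsDFS G σ → payoffD G (hide G) σ = G.valT) := by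
  refine ⟨fun σ h => ?_, fun σ h => ?_⟩
  · rw [payoffD_eq_seqPayoff _ h.nodup, ← rate_mul_one_sub_piT hG, ← h.prod_map_pAt]
    exact h.rateBounded hG σ List.prefix_rfl
  · rw [payoffD_eq_seqPayoff _ h.1.nodup]
    exact h.seqPayoff_eq_valT hG
end
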